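/- Let R be an exchange ring, n ≥ 1 a positive integer and I a twosided ideal of R. Then the relative elementary subgroup E_n(R,I) is a normal subgroup of the general linear group GL_n(R). -/

import Mathlib

/-!
Conjugating `t_{ij}(x)` by `g ∈ GL_n(R)` gives `1 + v x w`, where `v` is the `i`-th column of
`g⁻¹` and `w` the `j`-th row of `g`, so that `w v = 0` and `∑ₖ wₖ (g⁻¹)ₖⱼ = 1`. Since `w v = 0`,
the matrices `1 + v a w` multiply additively in `a`, so it suffices to treat `x = z c` with
`z ∈ I` and `c wₖ c = c` for some `k`. For such a term, conjugation by the elementary matrix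
`1 + eₖ ρ` with `ρ = c wₖ eₖ - c w` turns `1 + v z c w` into a matrix that differs from the
identity only in column `k`, and that one is a product of `I`-transvections and a commutator
of two transvections, one of them with entry in `I`.

The exchange property supplies the decomposition. For an idempotent `f` with `f = ∑ₖ f wₖ bₖ`, it
splits off one summand at a time as `f = f wₖ c + f'`, with `c wₖ c = c` and `f'` an idempotent
satisfying such a relation with one summand fewer. Hence `1` lies in the left ideal generated by
the outer inverses of the `wₖ`, and `x = x · 1` is a sum of terms `z c` as above.
-/

open Matrix

/-- An exchange ring: for every `x` there is an idempotent `e ∈ xR` with `1 - e ∈ (1-x)R`. -/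
def IsExchangeRing (R : Type*) [Ring R] : Prop :=
  ∀ x : R, ∃ e r s : R, e * e = e ∧ e = x * r ∧ 1 - e = (1 - x) * s

/-- The elementary transvection `t_{ij}(x) = e + x e^{ij}` as an element of `GL n R`. -/
def transv {n : ℕ} {R : Type*} [Ring R] (i j : Fin n) (hij : i ≠ j) (x : R) :
    (Matrix (Fin n) (Fin n) R)ˣ :=
  ⟨1 + Matrix.single i j x, 1 + Matrix.single i j (-x),
    by
      have h0 := (Matrix.single_mul_single_of_ne (c := x) i j i hij.symm (-x) :
          Matrix.single i j x * Matrix.single i j (-x) = 0)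
      have h1 := (Matrix.single_mul_single_of_ne (c := -x) i j i hij.symm x :
          Matrix.single i j (-x) * Matrix.single i j x = 0)
      simp [mul_add, add_mul, h0, h1, ← Matrix.single_add, add_assoc],
    by
      have h0 := (Matrix.single_mul_single_of_ne (c := x) i j i hij.symm (-x) :
          Matrix.single i j x * Matrix.single i j (-x) = 0)
      have h1 := (Matrix.single_mul_single_of_ne (c := -x) i j i hij.symm x :
          Matrix.single i j (-x) * Matrix.single i j x = 0)
      simp [mul_add, add_mul, h0, h1, ← Matrix.single_add, add_assoc]⟩

/-- The elementary subgroup `E_n(R)` of `GL_n(R)`. -/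
def elemGroup (n : ℕ) (R : Type*) [Ring R] : Subgroup ((Matrix (Fin n) (Fin n) R)ˣ) :=
  Subgroup.closure { g | ∃ i j : Fin n, ∃ hij : i ≠ j, ∃ x : R, g = transv i j hij x }

/-- The preelementary subgroup `E_n(I)` of level a two-sided ideal `I`. -/
def preElem (n : ℕ) (R : Type*) [Ring R] (I : TwoSidedIdeal R) : Subgroup ((Matrix (Fin n) (Fin n) R)ˣ) :=
  Subgroup.closure { g | ∃ i j : Fin n, ∃ hij : i ≠ j, ∃ x ∈ I, g = transv i j hij x }

/-- The relative elementary subgroup `E_n(R,I)`: the normal closure of `E_n(I)` in `E_n(R)`. -/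
def relElem (n : ℕ) (R : Type*) [Ring R] (I : TwoSidedIdeal R) : Subgroup ((Matrix (Fin n) (Fin n) R)ˣ) :=
  Subgroup.closure { g | ∃ τ ∈ elemGroup n R, ∃ ε ∈ preElem n R I, g = τ⁻¹ * ε * τ }

/-- The full congruence subgroup `C_n(R,I)`: preimage of the center of `GL_n(R/I)`. -/
def congrSubgroup (n : ℕ) (R : Type*) [Ring R] (I : TwoSidedIdeal R) :
    Subgroup ((Matrix (Fin n) (Fin n) R)ˣ) :=
  Subgroup.comap
    (Units.map ((RingHom.mapMatrix (RingCon.mk' I.ringCon)).toMonoidHom :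
      Matrix (Fin n) (Fin n) R →* Matrix (Fin n) (Fin n) I.ringCon.Quotient))
    (Subgroup.center ((Matrix (Fin n) (Fin n) I.ringCon.Quotient)ˣ))

/-- `x` is a product of `m` `H`-conjugates of `a` and `a⁻¹`. -/
def IsProdConj {G : Type*} [Group G] (H : Subgroup G) (a x : G) (m : ℕ) : Prop :=
  ∃ f : Fin m → G, (∀ k, ∃ h ∈ H, f k = h⁻¹ * a * h ∨ f k = h⁻¹ * a⁻¹ * h) ∧
    x = (List.ofFn f).prod

section Ring

variable {R : Type*} [Ring R]

theorem one_add_mul_one_add_of_mul_eq_zero {a b : R} (h : a * b = 0) :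
    (1 + a) * (1 + b) = 1 + (a + b) := by
  rw [mul_add, add_mul, add_mul, h]; noncomm_ring

theorem commutator_one_add_of_mul_eq_zero {a b : R} (ha : a * a = 0) (hb : b * b = 0)
    (hba : b * a = 0) : (1 + a) * (1 + b) * (1 - a) * (1 - b) = 1 + a * b := by
  have haba : a * b * a = 0 := by rw [mul_assoc, hba, mul_zero]
  have habb : a * b * b = 0 := by rw [mul_assoc, hb, mul_zero]
  simp only [mul_add, add_mul, mul_sub, sub_mul, mul_one, one_mul, ha, hb, hba, haba, habb,
    zero_mul]
  abel

end Ring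

namespace IsExchangeRing

variable {R : Type*} [Ring R]

/- Apply the exchange property to `x = f a + (1 - f)`: the idempotent `e ∈ xR` splits `f` as
`e f + (1 - e) f`, where `e f = f a (r f)` and `1 - e ∈ (1 - x)R = (f - f a)R`. -/
theorem exists_outer_inverse_split (hR : IsExchangeRing R) {f : R} (hf : IsIdempotentElem f)
    (a : R) : ∃ c f' t : R, c * a * c = c ∧ f = f * a * c + f' ∧ IsIdempotentElem f' ∧
      f' * f = f' ∧ f' = f' * (f - f * a) * t := by
  obtain ⟨e, r, s, he, her, hes⟩ := hR (f * a + (1 - f))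
  have hff : f * f = f := hf.eq
  have hfx : f * (f * a + (1 - f)) = f * a := by
    rw [mul_add, ← mul_assoc, hff, mul_sub, mul_one, hff, sub_self, add_zero]
  have hf1 : (1 - f) * f = 0 := by rw [sub_mul, one_mul, hff, sub_self]
  have h1e : (1 - f) * (1 - e) = 0 := by
    rw [hes, show 1 - (f * a + (1 - f)) = f * (1 - a) by noncomm_ring, ← mul_assoc,
      ← mul_assoc, hf1, zero_mul, zero_mul]
  have hfe : f * (1 - e) = 1 - e := by
    rw [sub_mul, one_mul, sub_eq_zero] at h1e; exact h1e.symm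
  have hfe' : (1 - f) * e = 1 - f := by
    rw [mul_sub, mul_one, sub_eq_zero] at h1e; exact h1e.symm
  have hfef : f * e * f = e * f := by
    have h : e * f - f * e * f = (1 - f) * e * f := by noncomm_ring
    rw [hfe', hf1, sub_eq_zero] at h
    exact h.symm
  have hp : f * a * (r * f) = e * f := by
    rw [← hfef, her, show f * ((f * a + (1 - f)) * r) * f = f * (f * a + (1 - f)) * r * f by
      noncomm_ring, hfx]
    noncomm_ring
  have hpp : e * f * (e * f) = e * f := by
    rw [show e * f * (e * f) = e * (f * e * f) by noncomm_ring, hfef, ← mul_assoc, he]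
  have hf'f' : (1 - e) * f * ((1 - e) * f) = (1 - e) * f := by
    rw [show (1 - e) * f * ((1 - e) * f) = (1 - e) * (f * (1 - e)) * f by noncomm_ring, hfe,
      (IsIdempotentElem.one_sub he).eq]
  refine ⟨r * f * (e * f), (1 - e) * f, s * f, ?_, ?_, hf'f', by rw [mul_assoc, hff], ?_⟩
  · rw [show r * f * (e * f) * a * (r * f * (e * f)) = r * f * (e * (f * a * (r * f)) * (e * f))
      by noncomm_ring, hp, ← mul_assoc e, he, hpp]
  · rw [show f * a * (r * f * (e * f)) = f * a * (r * f) * (e * f) by noncomm_ring, hp, hpp]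
    noncomm_ring
  · have h : (f - f * a) * (s * f) = (1 - e) * f := by
      rw [hes, ← mul_assoc, show f - f * a = 1 - (f * a + (1 - f)) by abel]
    rw [mul_assoc, h, hf'f']

theorem idempotent_mem_span_outer_inverses (hR : IsExchangeRing R) {ι : Type*} (w : ι → R)
    {f : R} (hf : IsIdempotentElem f) (b : ι → R) (s : Finset ι)
    (hsum : f = ∑ k ∈ s, f * w k * b k) : f ∈ Ideal.span {c | ∃ k, c * w k * c = c} := by
  classical
  induction s using Finset.induction_on generalizing f b with
  | empty =>
    rw [hsum, Finset.sum_empty]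
    exact zero_mem _
  | insert k₀ s hk₀ ih =>
    rw [Finset.sum_insert hk₀] at hsum
    obtain ⟨c, f', t, hc, hsplit, hf', hf'f, hf't⟩ := hR.exists_outer_inverse_split hf (w k₀ * b k₀)
    rw [hsplit, show f * (w k₀ * b k₀) * c = f * w k₀ * (b k₀ * c) by noncomm_ring]
    refine add_mem (Ideal.mul_mem_left _ _ (Ideal.subset_span ⟨k₀, ?_⟩))
      (ih hf' (fun k => b k * t) ?_)
    · rw [show b k₀ * c * w k₀ * (b k₀ * c) = b k₀ * (c * (w k₀ * b k₀) * c) by noncomm_ring, hc]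
    · have hrest : f - f * (w k₀ * b k₀) = ∑ k ∈ s, f * w k * b k := by
        rw [eq_sub_of_add_eq' hsum.symm, ← mul_assoc]
      rw [hrest, Finset.mul_sum, Finset.sum_mul] at hf't
      refine hf't.trans (Finset.sum_congr rfl fun k _ => ?_)
      rw [show f' * (f * w k * b k) * t = f' * f * w k * (b k * t) by noncomm_ring, hf'f]

end IsExchangeRing

theorem Subgroup.conj_mem_of_mem_closure {G : Type*} [Group G] {S : Set G} {N : Subgroup G}
    {g : G} (hS : ∀ s ∈ S, g⁻¹ * s * g ∈ N) {x : G} (hx : x ∈ Subgroup.closure S) :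
    g⁻¹ * x * g ∈ N := by
  have h : Subgroup.closure S ≤ N.comap (MulAut.conj g⁻¹).toMonoidHom :=
    (Subgroup.closure_le _).2 fun s hs => by simpa using hS s hs
  simpa using h hx

theorem Submonoid.apply_mem_of_forall_single_mem {ι A M : Type*} [Fintype ι] [DecidableEq ι]
    [AddCommMonoid A] [Monoid M] (S : Submonoid M) (φ : (ι → A) → M) (k : ι) (h0 : φ 0 = 1)
    (hadd : ∀ d₁ d₂, d₁ k = 0 → d₂ k = 0 → φ (d₁ + d₂) = φ d₁ * φ d₂) {d : ι → A}
    (hdk : d k = 0) (hS : ∀ i ≠ k, φ (Pi.single i (d i)) ∈ S) : φ d ∈ S := by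
  suffices d k = 0 ∧ φ d ∈ S from this.2
  rw [← Finset.univ_sum_single d]
  refine Finset.sum_induction _ (fun d => d k = 0 ∧ φ d ∈ S)
    (fun d₁ d₂ h₁ h₂ => ⟨by simp [h₁.1, h₂.1], hadd d₁ d₂ h₁.1 h₂.1 ▸ mul_mem h₁.2 h₂.2⟩)
    ⟨rfl, h0 ▸ one_mem S⟩ fun i _ => ?_
  by_cases hik : i = k
  · subst hik
    simp [hdk, h0, one_mem]
  · exact ⟨Pi.single_eq_of_ne' hik _, hS i hik⟩

namespace Matrix

variable {m : Type*} [DecidableEq m] {R : Type*} [Ring R]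

theorem vecMulVec_single_single (i j : m) (x y : R) :
    vecMulVec (Pi.single i x) (Pi.single j y) = single i j (x * y) := by
  ext a b
  simp only [vecMulVec_apply, single_apply, Pi.single_apply]
  split_ifs <;> simp_all

/- `ρ` is chosen so that `(z c) w (1 + eₖ ρ)` is supported on column `k` (this is where
`c wₖ c = c` enters), and `V` so that `(1 + eₖ ρ) V = v` (this uses `w ⬝ᵥ v = 0`). -/
theorem semiconjBy_one_add_vecMulVec_smul [Fintype m] {v w : m → R} (hwv : w ⬝ᵥ v = 0) {k : m}
    {c : R} (hc : c * w k * c = c) (z : R) :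
    SemiconjBy (1 + vecMulVec (Pi.single k 1) (Pi.single k (c * w k) - c • w))
      (1 + vecMulVec (v - Pi.single k (c * w k * v k)) (Pi.single k (z * c * w k)))
      (1 + vecMulVec v ((z * c) • w)) := by
  set ρ := Pi.single k (c * w k) - c • w
  set V := v - Pi.single k (c * w k * v k)
  have hAV : (1 + vecMulVec (Pi.single k 1) ρ) *ᵥ V = v := by
    have hρV : ρ ⬝ᵥ V = c * w k * v k := by
      simp [ρ, V, sub_dotProduct, dotProduct_sub, smul_dotProduct, hwv, mul_assoc]
    rw [add_mulVec, one_mulVec, vecMulVec_mulVec, hρV]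
    ext i
    by_cases hi : i = k <;> simp [V, hi]
  have hwA : ((z * c) • w) ᵥ* (1 + vecMulVec (Pi.single k 1) ρ) = Pi.single k (z * c * w k) := by
    rw [vecMul_add, vecMul_one, vecMul_vecMulVec]
    ext j
    by_cases hj : j = k
    · simp [ρ, hj]
    · simp only [Pi.add_apply, Pi.smul_apply, smul_eq_mul, dotProduct_single, ρ, Pi.sub_apply,
        Pi.single_eq_of_ne hj, zero_sub]
      calc z * c * w j + z * c * w k * 1 * -(c * w j) = z * c * w j - z * (c * w k * c) * w j := by
            noncomm_ring
        _ = 0 := by rw [hc, sub_self]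
  rw [SemiconjBy, mul_add, mul_one, mul_vecMulVec, hAV, add_mul, one_mul, vecMulVec_mul, hwA]

end Matrix

section Elementary

variable {n : ℕ} {R : Type*} [Ring R] (I : TwoSidedIdeal R)

def elemMat (n : ℕ) (R : Type*) [Ring R] : Submonoid (Matrix (Fin n) (Fin n) R) :=
  (elemGroup n R).toSubmonoid.map (Units.coeHom _)

def relElemMat (n : ℕ) (R : Type*) [Ring R] (I : TwoSidedIdeal R) :
    Submonoid (Matrix (Fin n) (Fin n) R) :=
  (relElem n R I).toSubmonoid.map (Units.coeHom _)

theorem transv_val (i j : Fin n) (hij : i ≠ j) (x : R) :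
    (transv i j hij x : Matrix (Fin n) (Fin n) R) = 1 + single i j x := rfl

theorem transv_inv (i j : Fin n) (hij : i ≠ j) (x : R) :
    (transv i j hij x)⁻¹ = transv i j hij (-x) := Units.ext rfl

theorem transv_mem_elemGroup (i j : Fin n) (hij : i ≠ j) (x : R) :
    transv i j hij x ∈ elemGroup n R :=
  Subgroup.subset_closure ⟨i, j, hij, x, rfl⟩

theorem transv_mem_relElem (i j : Fin n) (hij : i ≠ j) {x : R} (hx : x ∈ I) :
    transv i j hij x ∈ relElem n R I :=
  Subgroup.subset_closure ⟨1, one_mem _, _, Subgroup.subset_closure ⟨i, j, hij, x, hx, rfl⟩,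
    by simp⟩

theorem conj_mem_relElem {τ : (Matrix (Fin n) (Fin n) R)ˣ} (hτ : τ ∈ elemGroup n R)
    {u : (Matrix (Fin n) (Fin n) R)ˣ} (hu : u ∈ relElem n R I) : τ⁻¹ * u * τ ∈ relElem n R I := by
  refine Subgroup.conj_mem_of_mem_closure ?_ hu
  rintro _ ⟨σ, hσ, ε, hε, rfl⟩
  exact Subgroup.subset_closure ⟨σ * τ, mul_mem hσ hτ, ε, hε, by group⟩

theorem one_add_single_vecMulVec_mem_elemMat (k : Fin n) {d : Fin n → R} (hdk : d k = 0) :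
    1 + vecMulVec (Pi.single k 1) d ∈ elemMat n R := by
  refine Submonoid.apply_mem_of_forall_single_mem _ (fun d => 1 + vecMulVec (Pi.single k 1) d) k
    (by simp) (fun d₁ d₂ h₁ _ => ?_) hdk fun i hik => ?_
  · rw [one_add_mul_one_add_of_mul_eq_zero (by simp [vecMulVec_mul_vecMulVec, h₁]),
      vecMulVec_add]
  · exact ⟨transv k i hik.symm (d i), transv_mem_elemGroup _ _ _ _, by
      simp [transv_val, vecMulVec_single_single]⟩

theorem one_add_vecMulVec_single_mem_relElemMat (k : Fin n) {c : Fin n → R} {a : R}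
    (hck : c k = 0) (hc : ∀ i, c i * a ∈ I) :
    1 + vecMulVec c (Pi.single k a) ∈ relElemMat n R I := by
  refine Submonoid.apply_mem_of_forall_single_mem _ (fun c => 1 + vecMulVec c (Pi.single k a)) k
    (by simp) (fun c₁ c₂ _ h₂ => ?_) hck fun i hik => ?_
  · rw [one_add_mul_one_add_of_mul_eq_zero (by simp [vecMulVec_mul_vecMulVec, h₂]),
      add_vecMulVec]
  · exact ⟨transv i k hik (c i * a), transv_mem_relElem I _ _ _ (hc i), by
      simp [transv_val, vecMulVec_single_single]⟩

theorem one_add_single_mem_relElemMat [Nontrivial (Fin n)] (k : Fin n) {ρ σ : R} (hσ : σ ∈ I)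
    (hσρ : σ * ρ = 0) : 1 + single k k (ρ * σ) ∈ relElemMat n R I := by
  obtain ⟨l, hlk⟩ := exists_ne k
  refine ⟨transv k l hlk.symm ρ * transv l k hlk σ * (transv k l hlk.symm ρ)⁻¹ *
    (transv l k hlk σ)⁻¹, Subgroup.mul_mem _ ?_ (inv_mem (transv_mem_relElem I _ _ _ hσ)), ?_⟩
  · simpa using conj_mem_relElem I (inv_mem (transv_mem_elemGroup k l hlk.symm ρ))
      (transv_mem_relElem I l k hlk hσ)
  · simp only [Units.coeHom_apply, Units.val_mul, transv_inv, transv_val, ← single_neg,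
      ← sub_eq_add_neg]
    rw [commutator_one_add_of_mul_eq_zero, single_mul_single_same]
    · exact single_mul_single_of_ne _ _ _ _ hlk _
    · exact single_mul_single_of_ne _ _ _ _ hlk.symm _
    · rw [single_mul_single_same, hσρ, single_zero]

theorem one_add_vecMulVec_single_mem_relElemMat_of_mul_eq_zero [Nontrivial (Fin n)] (k : Fin n)
    {V : Fin n → R} {σ : R} (hσ : σ ∈ I) (hσV : σ * V k = 0) :
    1 + vecMulVec V (Pi.single k σ) ∈ relElemMat n R I := by
  have hsplit : 1 + vecMulVec V (Pi.single k σ) = (1 + single k k (V k * σ)) *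
      (1 + vecMulVec (V - Pi.single k (V k)) (Pi.single k σ)) := by
    rw [← vecMulVec_single_single, one_add_mul_one_add_of_mul_eq_zero, ← add_vecMulVec,
      add_sub_cancel]
    simp [vecMulVec_mul_vecMulVec]
  rw [hsplit]
  exact mul_mem (one_add_single_mem_relElemMat I k hσ hσV)
    (one_add_vecMulVec_single_mem_relElemMat I k (by simp) fun i => I.mul_mem_left _ _ hσ)

theorem one_add_vecMulVec_smul_mem_relElemMat [Nontrivial (Fin n)] {v w : Fin n → R}
    (hwv : w ⬝ᵥ v = 0) {k : Fin n} {c z : R} (hc : c * w k * c = c) (hz : z ∈ I) :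
    1 + vecMulVec v ((z * c) • w) ∈ relElemMat n R I := by
  have hσV : z * c * w k * (v - Pi.single k (c * w k * v k) : Fin n → R) k = 0 := by
    calc z * c * w k * (v - Pi.single k (c * w k * v k) : Fin n → R) k
        = z * c * w k * v k - z * (c * w k * c) * w k * v k := by simp; noncomm_ring
      _ = 0 := by rw [hc, sub_self]
  obtain ⟨u, hu, hu_val⟩ := one_add_single_vecMulVec_mem_elemMat k
    (d := Pi.single k (c * w k) - c • w) (by simp)
  obtain ⟨u', hu', hu'_val⟩ := one_add_vecMulVec_single_mem_relElemMat_of_mul_eq_zero I k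
    (I.mul_mem_right _ _ (I.mul_mem_right _ _ hz)) hσV
  have hconj := semiconjBy_one_add_vecMulVec_smul hwv hc z
  rw [← hu_val, ← hu'_val, Units.coeHom_apply, Units.coeHom_apply] at hconj
  refine ⟨u * u' * u⁻¹, by simpa using conj_mem_relElem I (inv_mem hu) hu', ?_⟩
  simp [hconj.eq]

theorem one_add_vecMulVec_smul_mem_relElemMat_of_mem_span [Nontrivial (Fin n)]
    {v w : Fin n → R} (hwv : w ⬝ᵥ v = 0) {a : R}
    (ha : a ∈ Ideal.span {c | ∃ k, c * w k * c = c}) {z : R} (hz : z ∈ I) :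
    1 + vecMulVec v ((z * a) • w) ∈ relElemMat n R I := by
  induction ha using Submodule.span_induction generalizing z with
  | mem c hc =>
    obtain ⟨k, hc⟩ := hc
    exact one_add_vecMulVec_smul_mem_relElemMat I hwv hc hz
  | zero => simp [one_mem]
  | add a b _ _ ha hb =>
    rw [mul_add, add_smul, vecMulVec_add, ← one_add_mul_one_add_of_mul_eq_zero]
    · exact mul_mem (ha hz) (hb hz)
    · simp [vecMulVec_mul_vecMulVec, hwv]
  | smul r a _ ha =>
    rw [smul_eq_mul, ← mul_assoc]
    exact ha (I.mul_mem_right _ _ hz)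

theorem conj_transv_mem_relElem (hR : IsExchangeRing R) (g : (Matrix (Fin n) (Fin n) R)ˣ)
    (i j : Fin n) (hij : i ≠ j) {x : R} (hx : x ∈ I) :
    g⁻¹ * transv i j hij x * g ∈ relElem n R I := by
  have := nontrivial_of_ne i j hij
  have hval : ((g⁻¹ * transv i j hij x * g : (Matrix (Fin n) (Fin n) R)ˣ) :
      Matrix (Fin n) (Fin n) R) = 1 + vecMulVec (g⁻¹.val.col i) ((x * 1) • g.val.row j) := by
    rw [Units.val_mul, Units.val_mul, transv_val, mul_add, add_mul, mul_one, Units.inv_mul,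
      ← one_mul x, ← vecMulVec_single_single, mul_vecMulVec, vecMulVec_mul, mulVec_single_one,
      single_vecMul, one_mul, mul_one]
  have hwv : g.val.row j ⬝ᵥ g⁻¹.val.col i = 0 := by
    change (g.val * g⁻¹.val) j i = 0
    rw [Units.mul_inv, one_apply_ne hij.symm]
  have hspan : (1 : R) ∈ Ideal.span {c | ∃ k, c * g.val.row j k * c = c} := by
    refine hR.idempotent_mem_span_outer_inverses _ IsIdempotentElem.one (g⁻¹.val.col j)
      Finset.univ ?_
    simp only [one_mul]
    change 1 = (g.val * g⁻¹.val) j j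
    rw [Units.mul_inv, one_apply_eq]
  obtain ⟨u, hu, hu_val⟩ := one_add_vecMulVec_smul_mem_relElemMat_of_mem_span I hwv hspan hx
  rwa [← Units.ext (hu_val.trans hval.symm)]

end Elementary

theorem relElem_normal_general {n : ℕ} (R : Type*) [Ring R] (hR : IsExchangeRing R)
    (I : TwoSidedIdeal R) : (relElem n R I).Normal := by
  have hpre (g : (Matrix (Fin n) (Fin n) R)ˣ) {ε} (hε : ε ∈ preElem n R I) :
      g⁻¹ * ε * g ∈ relElem n R I :=
    Subgroup.conj_mem_of_mem_closure (by
      rintro _ ⟨i, j, hij, x, hx, rfl⟩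
      exact conj_transv_mem_relElem I hR g i j hij hx) hε
  refine ⟨fun u hu g => ?_⟩
  convert Subgroup.conj_mem_of_mem_closure (g := g⁻¹) ?_ hu using 1
  · group
  · rintro _ ⟨τ, -, ε, hε, rfl⟩
    convert hpre (τ * g⁻¹) hε using 1
    group

theorem relElem_normal {n : ℕ} (R : Type*) [Ring R] (hR : IsExchangeRing R) (hn : 1 ≤ n)
    (I : TwoSidedIdeal R) : (relElem n R I).Normal :=
  relElem_normal_general R hR I
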